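/- Let 𝒜 ⊂ L(H) be a separable C*-algebra of bounded operators on a complex separable Hilbert space H. Then 𝒜 has a Følner sequence if and only if 𝒜 satisfies the Følner condition. -/

import Mathlib

open Filter Topology
open scoped ComplexOrder

noncomputable section

variable {H : Type*} [NormedAddCommGroup H] [InnerProductSpace ℂ H] [CompleteSpace H]

/-- `P` is a finite-rank orthogonal projection on the Hilbert space `H`. -/
def IsFinRankProj (P : H →L[ℂ] H) : Prop :=
  IsIdempotentElem P ∧ IsSelfAdjoint P ∧ FiniteDimensional ℂ (LinearMap.range (P : H →ₗ[ℂ] H))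

/-- The Hilbert–Schmidt norm of an operator, computed with respect to the Hilbert basis `b`
(for Hilbert–Schmidt operators it is independent of the choice of `b`). -/
def hsNorm {ι : Type*} (b : HilbertBasis ι ℂ H) (T : H →L[ℂ] H) : ℝ :=
  Real.sqrt (∑' i, ‖T (b i)‖ ^ 2)

/-- The canonical trace of an operator, computed with respect to the Hilbert basis `b`
(for trace-class operators it is independent of the choice of `b`). -/
def trOp {ι : Type*} (b : HilbertBasis ι ℂ H) (T : H →L[ℂ] H) : ℂ :=
  ∑' i, (inner ℂ (b i) (T (b i)) : ℂ)

/-- `{P n}` is a Følner sequence (of non-zero finite-rank orthogonal projections)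
for the set of operators `S ⊆ L(H)`. -/
def IsFolnerSeq {ι : Type*} (b : HilbertBasis ι ℂ H) (S : Set (H →L[ℂ] H))
    (P : ℕ → H →L[ℂ] H) : Prop :=
  (∀ n, IsFinRankProj (P n) ∧ P n ≠ 0) ∧
  ∀ A ∈ S, Tendsto (fun n => hsNorm b (A * P n - P n * A) / hsNorm b (P n)) atTop (𝓝 0)

/-- A proper Følner sequence: an increasing Følner sequence converging strongly to `1`. -/
def IsProperFolnerSeq {ι : Type*} (b : HilbertBasis ι ℂ H) (S : Set (H →L[ℂ] H))
    (P : ℕ → H →L[ℂ] H) : Prop :=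
  IsFolnerSeq b S P ∧ Monotone (fun n => LinearMap.range (P n : H →ₗ[ℂ] H)) ∧
    ∀ x : H, Tendsto (fun n => P n x) atTop (𝓝 x)

open scoped ENNReal InnerProductSpace InnerProduct

/-!
A Følner sequence yields the Følner condition by taking a late enough term. Conversely, choose a
dense sequence `u` in `𝒜` and projections `Qₙ` that are `1/(n+1)`-Følner for `u 0, …, u n`. Since
`‖XQ‖₂ ≤ ‖X‖ ‖Q‖₂` and, by invariance of the Hilbert–Schmidt norm under adjoints, also
`‖QX‖₂ ≤ ‖X‖ ‖Q‖₂`, the ratio `‖AQ - QA‖₂ / ‖Q‖₂` is `2`-Lipschitz in `A`. Hence the set of `A` with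
`‖AQₙ - QₙA‖₂ / ‖Qₙ‖₂ → 0` is closed; it contains every `u k`, so it contains `𝒜`.
-/

theorem ENNReal.Lp_add_le_tsum {ι : Type*} (f g : ι → ℝ≥0∞) {p : ℝ} (hp : 1 ≤ p) :
    (∑' i, (f i + g i) ^ p) ^ (1 / p) ≤ (∑' i, f i ^ p) ^ (1 / p) + (∑' i, g i ^ p) ^ (1 / p) := by
  have hp0 : 0 < p := zero_lt_one.trans_le hp
  rw [one_div, ENNReal.rpow_inv_le_iff hp0, ENNReal.tsum_eq_iSup_sum]
  refine iSup_le fun s => ?_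
  rw [← ENNReal.rpow_inv_le_iff hp0, ← one_div]
  refine (ENNReal.Lp_add_le s f g hp).trans (add_le_add ?_ ?_) <;>
    exact ENNReal.rpow_le_rpow (ENNReal.sum_le_tsum s) (by positivity)

namespace HilbertBasis

variable {𝕜 E ι : Type*} [RCLike 𝕜] [NormedAddCommGroup E] [InnerProductSpace 𝕜 E]

theorem tsum_enorm_inner_sq (b : HilbertBasis ι 𝕜 E) (x : E) :
    ∑' i, ‖⟪b i, x⟫_𝕜‖ₑ ^ 2 = ‖x‖ₑ ^ 2 := by
  have h := lp.hasSum_norm (p := 2) (by norm_num) (b.repr x)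
  simp only [ENNReal.toReal_ofNat, Real.rpow_two, LinearIsometryEquiv.norm_map,
    HilbertBasis.repr_apply_apply] at h
  simp_rw [← ofReal_norm, ← ENNReal.ofReal_pow (norm_nonneg _)]
  rw [← ENNReal.ofReal_tsum_of_nonneg (fun _ => by positivity) h.summable, h.tsum_eq]

theorem ext_iff_apply {F : Type*} [NormedAddCommGroup F] [NormedSpace 𝕜 F]
    (b : HilbertBasis ι 𝕜 E) {S T : E →L[𝕜] F} : S = T ↔ ∀ i, S (b i) = T (b i) := by
  refine ⟨fun h i => h ▸ rfl, fun h => ContinuousLinearMap.ext_on ?_ (Set.forall_mem_range.2 h)⟩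
  exact Submodule.dense_iff_topologicalClosure_eq_top.2 b.dense_span

end HilbertBasis

theorem enorm_inner_symm {𝕜 E : Type*} [RCLike 𝕜] [NormedAddCommGroup E] [InnerProductSpace 𝕜 E]
    (x y : E) : ‖⟪x, y⟫_𝕜‖ₑ = ‖⟪y, x⟫_𝕜‖ₑ := by
  simp only [← ofReal_norm, norm_inner_symm]

section HilbertSchmidt

variable {𝕜 E ι : Type*} [RCLike 𝕜] [NormedAddCommGroup E] [InnerProductSpace 𝕜 E]
  (b : HilbertBasis ι 𝕜 E)

/-- Unlike `hsNorm`, which takes the junk value `0` on non-Hilbert–Schmidt operators, this is `∞`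
there, so that the estimates below need no summability hypotheses. -/
def hsENorm (T : E →L[𝕜] E) : ℝ≥0∞ := (∑' i, ‖T (b i)‖ₑ ^ 2) ^ (1 / 2 : ℝ)

theorem hsENorm_eq_zero_iff {T : E →L[𝕜] E} : hsENorm b T = 0 ↔ T = 0 := by
  simp [hsENorm, ENNReal.rpow_eq_zero_iff, ENNReal.tsum_eq_zero, b.ext_iff_apply]

theorem hsENorm_add_le (S T : E →L[𝕜] E) : hsENorm b (S + T) ≤ hsENorm b S + hsENorm b T := by
  simp only [hsENorm, ← ENNReal.rpow_two]
  calc _ ≤ (∑' i, (‖S (b i)‖ₑ + ‖T (b i)‖ₑ) ^ (2 : ℝ)) ^ (1 / 2 : ℝ) := by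
        gcongr with i
        exact enorm_add_le _ _
    _ ≤ _ := ENNReal.Lp_add_le_tsum _ _ one_le_two

theorem hsENorm_neg (T : E →L[𝕜] E) : hsENorm b (-T) = hsENorm b T := by
  simp [hsENorm]

theorem hsENorm_sub_le (S T : E →L[𝕜] E) : hsENorm b (S - T) ≤ hsENorm b S + hsENorm b T := by
  simpa only [sub_eq_add_neg, hsENorm_neg] using hsENorm_add_le b S (-T)

theorem hsENorm_mul_le (T S : E →L[𝕜] E) : hsENorm b (T * S) ≤ ‖T‖ₑ * hsENorm b S := by
  have hT : ‖T‖ₑ = (‖T‖ₑ ^ 2) ^ (1 / 2 : ℝ) := by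
    simpa using (ENNReal.pow_rpow_inv_natCast two_ne_zero ‖T‖ₑ).symm
  rw [hsENorm, hsENorm, hT, ← ENNReal.mul_rpow_of_nonneg _ _ (by norm_num),
    ← ENNReal.tsum_mul_left]
  gcongr with i
  rw [← mul_pow]
  gcongr
  exact T.le_opENorm (S (b i))

theorem hsENorm_adjoint [CompleteSpace E] (T : E →L[𝕜] E) :
    hsENorm b (T†) = hsENorm b T := by
  have parseval (S : E →L[𝕜] E) :
      ∑' i, ‖S (b i)‖ₑ ^ 2 = ∑' i, ∑' j, ‖⟪b j, S (b i)⟫_𝕜‖ₑ ^ 2 :=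
    tsum_congr fun i => (b.tsum_enorm_inner_sq _).symm
  rw [hsENorm, hsENorm, parseval, parseval, ENNReal.tsum_comm]
  simp_rw [ContinuousLinearMap.adjoint_inner_right, enorm_inner_symm (b _)]

variable [CompleteSpace E]

theorem hsENorm_mul_le' (S T : E →L[𝕜] E) : hsENorm b (S * T) ≤ hsENorm b S * ‖T‖ₑ := by
  calc hsENorm b (S * T)
      = hsENorm b (T† * S†) := by
        rw [← hsENorm_adjoint b (S * T), ← ContinuousLinearMap.star_eq_adjoint, star_mul,
          ContinuousLinearMap.star_eq_adjoint, ContinuousLinearMap.star_eq_adjoint]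
    _ ≤ ‖T†‖ₑ * hsENorm b (S†) := hsENorm_mul_le b _ _
    _ = hsENorm b S * ‖T‖ₑ := by
        rw [hsENorm_adjoint, ContinuousLinearMap.adjoint.enorm_map, mul_comm]

theorem hsENorm_commutator_le (A Q : E →L[𝕜] E) :
    hsENorm b (A * Q - Q * A) ≤ 2 * ‖A‖ₑ * hsENorm b Q :=
  calc hsENorm b (A * Q - Q * A) ≤ ‖A‖ₑ * hsENorm b Q + hsENorm b Q * ‖A‖ₑ :=
        (hsENorm_sub_le b _ _).trans (add_le_add (hsENorm_mul_le b _ _) (hsENorm_mul_le' b _ _))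
    _ = 2 * ‖A‖ₑ * hsENorm b Q := by ring

theorem hsENorm_commutator_le_add (A B Q : E →L[𝕜] E) :
    hsENorm b (A * Q - Q * A) ≤ hsENorm b (B * Q - Q * B) + 2 * ‖A - B‖ₑ * hsENorm b Q :=
  calc hsENorm b (A * Q - Q * A)
      = hsENorm b ((B * Q - Q * B) + ((A - B) * Q - Q * (A - B))) := by
        congr 1; noncomm_ring
    _ ≤ _ := (hsENorm_add_le b _ _).trans (add_le_add le_rfl (hsENorm_commutator_le b _ _))

theorem hsENorm_ne_top_of_finiteDimensional_range (T : E →L[𝕜] E)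
    [FiniteDimensional 𝕜 (LinearMap.range (T : E →ₗ[𝕜] E))] : hsENorm b T ≠ ⊤ := by
  set V := LinearMap.range (T : E →ₗ[𝕜] E)
  let v := (stdOrthonormalBasis 𝕜 V).toHilbertBasis
  have hTx (x : E) : ‖T x‖ₑ ^ 2 = ∑' k, ‖⟪x, (T†) (v k)⟫_𝕜‖ₑ ^ 2 := by
    calc ‖T x‖ₑ ^ 2 = ‖(⟨T x, LinearMap.mem_range_self _ x⟩ : V)‖ₑ ^ 2 := rfl
      _ = _ := (v.tsum_enorm_inner_sq _).symm
      _ = _ := tsum_congr fun k => by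
        rw [Submodule.coe_inner, ← ContinuousLinearMap.adjoint_inner_left, enorm_inner_symm]
  have hsum : ∑' i, ‖T (b i)‖ₑ ^ 2 = ∑ k, ‖(T†) (v k)‖ₑ ^ 2 := by
    simp_rw [hTx, ← b.tsum_enorm_inner_sq ((T†) _)]
    rw [ENNReal.tsum_comm, tsum_fintype]
  rw [hsENorm, hsum]
  exact ENNReal.rpow_ne_top_of_nonneg (by norm_num) (ENNReal.sum_ne_top.2 fun k _ => by finiteness)

end HilbertSchmidt

section Folner

variable {E ι : Type*} [NormedAddCommGroup E] [InnerProductSpace ℂ E] (b : HilbertBasis ι ℂ E)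

theorem hsNorm_eq_toReal_hsENorm (T : E →L[ℂ] E) : hsNorm b T = (hsENorm b T).toReal := by
  rw [hsNorm, hsENorm, ← ENNReal.toReal_rpow, ENNReal.tsum_toReal_eq fun _ => by finiteness,
    Real.sqrt_eq_rpow]
  simp [ENNReal.toReal_pow]

theorem hsNorm_nonneg (T : E →L[ℂ] E) : 0 ≤ hsNorm b T := Real.sqrt_nonneg _

variable [CompleteSpace E]

namespace IsFinRankProj

variable {b} {Q : E →L[ℂ] E}

theorem hsENorm_ne_top (hQ : IsFinRankProj Q) : hsENorm b Q ≠ ⊤ :=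
  haveI := hQ.2.2
  hsENorm_ne_top_of_finiteDimensional_range b Q

theorem hsNorm_pos (hQ : IsFinRankProj Q) (hQ0 : Q ≠ 0) : 0 < hsNorm b Q := by
  rw [hsNorm_eq_toReal_hsENorm]
  exact ENNReal.toReal_pos ((hsENorm_eq_zero_iff b).not.2 hQ0) hQ.hsENorm_ne_top

theorem hsNorm_commutator_div_le (hQ : IsFinRankProj Q) (hQ0 : Q ≠ 0) (A B : E →L[ℂ] E) :
    hsNorm b (A * Q - Q * A) / hsNorm b Q ≤
      hsNorm b (B * Q - Q * B) / hsNorm b Q + 2 * ‖A - B‖ := by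
  have hQtop := hQ.hsENorm_ne_top (b := b)
  have hBtop : hsENorm b (B * Q - Q * B) ≠ ⊤ :=
    ne_top_of_le_ne_top (by finiteness) (hsENorm_commutator_le b B Q)
  have key : hsNorm b (A * Q - Q * A) ≤ hsNorm b (B * Q - Q * B) + 2 * ‖A - B‖ * hsNorm b Q := by
    simp only [hsNorm_eq_toReal_hsENorm]
    calc _ ≤ (hsENorm b (B * Q - Q * B) + 2 * ‖A - B‖ₑ * hsENorm b Q).toReal :=
          ENNReal.toReal_mono (by finiteness) (hsENorm_commutator_le_add b A B Q)
      _ = _ := by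
          rw [ENNReal.toReal_add hBtop (by finiteness), ENNReal.toReal_mul, ENNReal.toReal_mul,
            toReal_enorm]
          norm_num
  have hpos := hQ.hsNorm_pos (b := b) hQ0
  rw [div_add' _ _ _ hpos.ne', div_le_div_iff_of_pos_right hpos]
  linarith

end IsFinRankProj

theorem isClosed_setOf_tendsto_hsNorm_commutator_div {Q : ℕ → E →L[ℂ] E}
    (hQ : ∀ n, IsFinRankProj (Q n) ∧ Q n ≠ 0) :
    IsClosed {A | Tendsto (fun n => hsNorm b (A * Q n - Q n * A) / hsNorm b (Q n))
      atTop (𝓝 0)} := by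
  refine isClosed_of_closure_subset fun A hA => Metric.tendsto_nhds.2 fun ε hε => ?_
  obtain ⟨B, hB, hAB⟩ := Metric.mem_closure_iff.1 hA (ε / 4) (by positivity)
  filter_upwards [Metric.tendsto_nhds.1 hB (ε / 2) (by positivity)] with n hn
  have hnonneg (C : E →L[ℂ] E) : 0 ≤ hsNorm b (C * Q n - Q n * C) / hsNorm b (Q n) :=
    div_nonneg (hsNorm_nonneg b _) (hsNorm_nonneg b _)
  rw [Real.dist_0_eq_abs, abs_of_nonneg (hnonneg _)] at hn ⊢
  rw [dist_eq_norm] at hAB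
  linarith [(hQ n).1.hsNorm_commutator_div_le (b := b) (hQ n).2 A B]

def FolnerCondition (S : Set (E →L[ℂ] E)) : Prop :=
  ∀ F : Finset (E →L[ℂ] E), (F : Set (E →L[ℂ] E)) ⊆ S →
    ∀ ε > (0 : ℝ), ∃ Q : E →L[ℂ] E, IsFinRankProj Q ∧ Q ≠ 0 ∧
      ∀ A ∈ F, hsNorm b (A * Q - Q * A) / hsNorm b Q < ε

variable {b} {S : Set (E →L[ℂ] E)}

theorem IsFolnerSeq.folnerCondition {P : ℕ → E →L[ℂ] E} (hP : IsFolnerSeq b S P) :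
    FolnerCondition b S := by
  intro F hF ε hε
  obtain ⟨n, hn⟩ := ((eventually_all_finset F).2 fun A hA =>
    (hP.2 A (hF hA)).eventually_lt_const hε).exists
  exact ⟨P n, (hP.1 n).1, (hP.1 n).2, hn⟩

theorem FolnerCondition.exists_isFolnerSeq (h : FolnerCondition b S)
    (hS : TopologicalSpace.IsSeparable S) (hne : S.Nonempty) : ∃ P, IsFolnerSeq b S P := by
  classical
  obtain ⟨t, htS, htc, hSt⟩ := hS.exists_countable_dense_subset
  obtain ⟨u, rfl⟩ := htc.exists_eq_range <| by
    by_contra! ht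
    simpa [ht] using hne.mono hSt
  have hF (n : ℕ) : ((Finset.range (n + 1)).image u : Set (E →L[ℂ] E)) ⊆ S := by
    rw [Finset.coe_image]
    exact (Set.image_subset_range _ _).trans htS
  choose Q hQ hQ0 hQu using fun n => h _ (hF n) (1 / ((n : ℝ) + 1)) Nat.one_div_pos_of_nat
  refine ⟨Q, fun n => ⟨hQ n, hQ0 n⟩, fun A hA => ?_⟩
  suffices Set.range u ⊆ {A | Tendsto
      (fun n => hsNorm b (A * Q n - Q n * A) / hsNorm b (Q n)) atTop (𝓝 0)} from
    (isClosed_setOf_tendsto_hsNorm_commutator_div b fun n => ⟨hQ n, hQ0 n⟩).closure_subset_iff.2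
      this (hSt hA)
  rintro _ ⟨k, rfl⟩
  refine squeeze_zero' (Eventually.of_forall fun n => div_nonneg (hsNorm_nonneg b _)
    (hsNorm_nonneg b _)) ?_ tendsto_one_div_add_atTop_nhds_zero_nat
  filter_upwards [eventually_ge_atTop k] with n hn
  exact (hQu n _ (Finset.mem_image_of_mem u (Finset.mem_range.2 (by omega)))).le

end Folner

theorem exists_folnerSeq_iff_folner_condition_general
    {H : Type*} [NormedAddCommGroup H] [InnerProductSpace ℂ H] [CompleteSpace H]
    {ι : Type*} (b : HilbertBasis ι ℂ H)
    (𝒜 : StarSubalgebra ℂ (H →L[ℂ] H))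
    (hsep : TopologicalSpace.IsSeparable (𝒜 : Set (H →L[ℂ] H))) :
    (∃ P : ℕ → H →L[ℂ] H, IsFolnerSeq b (𝒜 : Set (H →L[ℂ] H)) P) ↔
      (∀ F : Finset (H →L[ℂ] H), (F : Set (H →L[ℂ] H)) ⊆ (𝒜 : Set (H →L[ℂ] H)) →
        ∀ ε > (0 : ℝ), ∃ Q : H →L[ℂ] H, IsFinRankProj Q ∧ Q ≠ 0 ∧
          ∀ A ∈ F, hsNorm b (A * Q - Q * A) / hsNorm b Q < ε) :=
  ⟨fun ⟨_, hP⟩ => hP.folnerCondition,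
    fun h => FolnerCondition.exists_isFolnerSeq h hsep ⟨1, 𝒜.one_mem⟩⟩

/-- a separable concrete C*-algebra `𝒜 ⊆ L(H)` has a Følner sequence iff it
satisfies the Følner condition (local finite approximation by finite-rank projections). -/
theorem exists_folnerSeq_iff_folner_condition
    {H : Type*} [NormedAddCommGroup H] [InnerProductSpace ℂ H] [CompleteSpace H]
    {ι : Type*} [Countable ι] (b : HilbertBasis ι ℂ H)
    (𝒜 : StarSubalgebra ℂ (H →L[ℂ] H)) (hclosed : IsClosed (𝒜 : Set (H →L[ℂ] H)))
    (hsep : TopologicalSpace.IsSeparable (𝒜 : Set (H →L[ℂ] H))) :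
    (∃ P : ℕ → H →L[ℂ] H, IsFolnerSeq b (𝒜 : Set (H →L[ℂ] H)) P) ↔
      (∀ F : Finset (H →L[ℂ] H), (F : Set (H →L[ℂ] H)) ⊆ (𝒜 : Set (H →L[ℂ] H)) →
        ∀ ε > (0 : ℝ), ∃ Q : H →L[ℂ] H, IsFinRankProj Q ∧ Q ≠ 0 ∧
          ∀ A ∈ F, hsNorm b (A * Q - Q * A) / hsNorm b Q < ε) :=
  exists_folnerSeq_iff_folner_condition_general b 𝒜 hsep
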